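/- arXiv:2509.20737 — 3 statements merged into one kernel-verified Lean document; each statement's English description precedes it below -/
import Mathlib

section
/- Let W = ⊕_{n∈ℕ} W⟨n⟩ be an ℕ-graded vector space, C a graded subspace, and suppose there exists N₀ ∈ ℕ such that ⊕_{n>N₀} W⟨n⟩ ⊆ C. Let M = ⊕_{n=0}^{N₀} W⟨n⟩ and suppose each W⟨n⟩ with n > N₀ is spanned by elements v_{-1}w with v ∈ V_{(l)}, l ≥ 1, w ∈ W⟨n-l⟩. Then W is spanned by elements of the form v^{(1)}_{-1}⋯v^{(i)}_{-1}w with i ∈ ℕ, v^{(j)} ∈ V and w ∈ M. In particular W is generated by the finite-dimensional subspace M under the operators v_{-1}. -/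
/-- if every homogeneous piece `W⟨n⟩` with `n > N₀` is contained in
the span of elements `v_{-1} w` with `w` of strictly smaller degree, then `W` is
generated from `M = ⊕_{n ≤ N₀} W⟨n⟩` by the operators `v_{-1}`: every submodule
containing `M` and stable under all the operators `op v` is all of `W`. -/
theorem stmt_2 {W V : Type*} [AddCommGroup W] [Module ℂ W]
    (Wn : ℕ → Submodule ℂ W) (hint : DirectSum.IsInternal Wn)
    (op : V → W →ₗ[ℂ] W) (N₀ : ℕ)
    (hspan : ∀ n : ℕ, N₀ < n →
      Wn n ≤ Submodule.span ℂ
        {x : W | ∃ (v : V) (m : ℕ) (w : W), m < n ∧ w ∈ Wn m ∧ x = op v w}) :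
    ∀ P : Submodule ℂ W, (∀ k ≤ N₀, Wn k ≤ P) →
      (∀ (v : V), ∀ x ∈ P, op v x ∈ P) → P = ⊤ := by
  intro P hM hop
  have hall : ∀ n : ℕ, Wn n ≤ P := by
    intro n
    induction n using Nat.strong_induction_on with
    | _ n ih =>
      by_cases h : n ≤ N₀
      · exact hM n h
      · refine le_trans (hspan n (not_le.mp h)) (Submodule.span_le.mpr ?_)
        rintro x ⟨v, m, w, hm, hw, rfl⟩
        exact hop v w (ih m hm hw)
  have htop : (⨆ n, Wn n) = ⊤ := hint.submodule_iSup_eq_top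
  rw [eq_top_iff, ← htop]
  exact iSup_le hall
end

section
/- Suppose W₃ is a ℂ-vector space with operator L₃(0), W₁ and W₂ are ℂ-vector spaces with operators L₁(0) = S₁+N₁ and L₂(0) = S₂+N₂ (semisimple plus nilpotent parts), and Y_{n,k} : W₁ → Hom(W₂,W₃) are linear maps (for n ∈ ℂ, 0 ≤ k ≤ K, with Y_{n,k}=0 for k > K) satisfying (L₃(0) − (wt w₁ − n − 1 + wt w₂)) Y_{n,k}(w₁)w₂ = Y_{n,k}(N₁w₁)w₂ + Y_{n,k}(w₁)N₂w₂ + (k+1)Y_{n,k+1}(w₁)w₂ for homogeneous w₁ ∈ W₁ of weight wt w₁ and w₂ ∈ W₂ of weight wt w₂. If N₁ and N₂ are nilpotent (N₁^{a}=0, N₂^{b}=0), then (L₃(0) − (wt w₁ − n − 1 + wt w₂))^J Y_{n,k}(w₁)w₂ = 0 for J sufficiently large (e.g., J ≥ a+b+K+1); i.e., each Y_{n,k}(w₁)w₂ is a generalized eigenvector of L₃(0) with eigenvalue wt w₁ − n − 1 + wt w₂. -/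
/-- the coefficient form of the `L(0)`-commutator formula for a
logarithmic intertwining operator implies that each `Y_{n,k}(w₁)w₂` is a
generalized eigenvector of `L₃(0)` with eigenvalue `wt w₁ - n - 1 + wt w₂`:
`(L₃(0) - (wt w₁ - n - 1 + wt w₂))^J` kills it for `J ≥ a + b + K + 1`. -/
theorem stmt_6 {W₁ W₂ W₃ : Type*} [AddCommGroup W₁] [Module ℂ W₁]
    [AddCommGroup W₂] [Module ℂ W₂] [AddCommGroup W₃] [Module ℂ W₃]
    (L₃ : W₃ →ₗ[ℂ] W₃) (N₁ : W₁ →ₗ[ℂ] W₁) (N₂ : W₂ →ₗ[ℂ] W₂)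
    (a b : ℕ) (hN₁ : N₁ ^ a = 0) (hN₂ : N₂ ^ b = 0)
    (K : ℕ) (wt₁ wt₂ : ℂ)
    (Y : ℂ → ℕ → W₁ →ₗ[ℂ] W₂ →ₗ[ℂ] W₃)
    (hYK : ∀ (n : ℂ) (k : ℕ), K < k → Y n k = 0)
    (hrec : ∀ (n : ℂ) (k : ℕ) (w₁ : W₁) (w₂ : W₂),
      (L₃ - (wt₁ - n - 1 + wt₂) • (LinearMap.id : W₃ →ₗ[ℂ] W₃))
          (Y n k w₁ w₂) =
        Y n k (N₁ w₁) w₂ + Y n k w₁ (N₂ w₂)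
          + ((k : ℂ) + 1) • Y n (k + 1) w₁ w₂) :
    ∀ (n : ℂ) (k : ℕ) (w₁ : W₁) (w₂ : W₂) (J : ℕ), a + b + K + 1 ≤ J →
      (((L₃ - (wt₁ - n - 1 + wt₂) • (LinearMap.id : W₃ →ₗ[ℂ] W₃)) ^ J))
        (Y n k w₁ w₂) = 0 := by
  intro n k w₁ w₂ J hJ
  set A : W₃ →ₗ[ℂ] W₃ :=
    L₃ - (wt₁ - n - 1 + wt₂) • (LinearMap.id : W₃ →ₗ[ℂ] W₃) with hA
  suffices h : ∀ (m i j k : ℕ), a + b + K + 1 ≤ m + i + j + k →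
      (A ^ m) (Y n k ((N₁ ^ i) w₁) ((N₂ ^ j) w₂)) = 0 by
    have := h J 0 0 k (by omega)
    simpa using this
  intro m
  induction m with
  | zero =>
    intro i j k h
    have hcase : a ≤ i ∨ b ≤ j ∨ K < k := by omega
    rcases hcase with hi | hj | hk
    · have hz : (N₁ ^ i) w₁ = 0 := by
        have : N₁ ^ i = N₁ ^ (i - a) * N₁ ^ a := by
          rw [← pow_add]; congr 1; omega
        rw [this, hN₁, mul_zero]; rfl
      simp [hz]
    · have hz : (N₂ ^ j) w₂ = 0 := by
        have : N₂ ^ j = N₂ ^ (j - b) * N₂ ^ b := by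
          rw [← pow_add]; congr 1; omega
        rw [this, hN₂, mul_zero]; rfl
      simp [hz]
    · simp [hYK n k hk]
  | succ m ih =>
    intro i j k h
    rw [pow_succ, Module.End.mul_apply, hrec]
    have e1 : N₁ ((N₁ ^ i) w₁) = (N₁ ^ (i + 1)) w₁ := by
      rw [pow_succ', Module.End.mul_apply]
    have e2 : N₂ ((N₂ ^ j) w₂) = (N₂ ^ (j + 1)) w₂ := by
      rw [pow_succ', Module.End.mul_apply]
    rw [e1, e2, map_add, map_add, map_smul,
      ih (i + 1) j k (by omega), ih i (j + 1) k (by omega),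
      ih i j (k + 1) (by omega)]
    simp
end

section
/- (Injectivity of the evaluation map) With notation as in Nahm's inequality: let f : C₁(W₃)^⊥ → (M₁⊗M₂)* be defined by f(w₃')(w₁⊗w₂) = ⟨w₃', Y(w₁,z)w₂⟩. Suppose w₃' ∈ C₁(W₃)^⊥ satisfies ⟨w₃', Y(w₁,z)w₂⟩ = 0 for all w₁ ∈ M₁, w₂ ∈ M₂. Then by strong induction on the sum of ℕ-grading components of weights — using that modulo terms annihilated by w₃' (via the Jacobi identity and w₃' vanishing on C₁(W₃)), ⟨w₃', Y(u_{-1}w̃₁, z)w₂⟩ reduces to a combination of ⟨w₃', Y(w̃₁, z)ŵ₂⟩ with strictly smaller total grading — one obtains ⟨w₃', Y(w₁,z)w₂⟩ = 0 for all w₁ ∈ W₁, w₂ ∈ W₂. -/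
/-!
Strong induction on the total degree `n + m` of a homogeneous pair `(x, y)`. Graded
complements let one split `x = c₁ + m₁` and `y = c₂ + m₂` homogeneously; then
`B x y = B c₁ y + B m₁ c₂ + B m₁ m₂`, where the first two terms are combinations of
values of lower total degree, which vanish by induction, and the last vanishes by
hypothesis. Bilinearity spreads the vanishing from homogeneous pairs to all pairs.
-/

open DirectSum

section Graded

variable {R M : Type*} [Semiring R] [AddCommMonoid M] [Module R M]
  (ℳ : ℕ → Submodule R M) [Decomposition ℳ]

theorem Submodule.isHomogeneous_of_eq_iSup_inf {p : Submodule R M}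
    (hp : p = ⨆ n, p ⊓ ℳ n) : p.IsHomogeneous ℳ := by
  intro n x hx
  rw [hp] at hx
  refine Submodule.iSup_induction (motive := fun x ↦ (decompose ℳ x n : M) ∈ p) _ hx
    (fun i y hy ↦ ?_) (by simp) fun y z hy hz ↦ by simpa using p.add_mem hy hz
  rcases eq_or_ne i n with rfl | hin
  · rw [decompose_of_mem_same ℳ hy.2]
    exact hy.1
  · rw [decompose_of_mem_ne ℳ hy.2 hin]
    exact p.zero_mem

theorem exists_mem_inf_add_mem_inf_of_isCompl {p q : Submodule R M}
    (hp : p.IsHomogeneous ℳ) (hq : q.IsHomogeneous ℳ) (hpq : IsCompl p q)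
    {n : ℕ} {x : M} (hx : x ∈ ℳ n) :
    ∃ c ∈ p ⊓ ℳ n, ∃ m ∈ q ⊓ ℳ n, x = c + m := by
  have hx' : x ∈ p ⊔ q := hpq.sup_eq_top ▸ Submodule.mem_top
  obtain ⟨c, hc, m, hm, rfl⟩ := Submodule.mem_sup.mp hx'
  refine ⟨decompose ℳ c n, ⟨hp n hc, SetLike.coe_mem _⟩,
    decompose ℳ m n, ⟨hq n hm, SetLike.coe_mem _⟩, ?_⟩
  rw [← decompose_of_mem_same ℳ hx, decompose_add, DFinsupp.add_apply,
    Submodule.coe_add]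

end Graded

section Pairing

variable {R W₁ W₂ P : Type*} [CommSemiring R] [AddCommMonoid W₁] [Module R W₁]
  [AddCommMonoid W₂] [Module R W₂] [AddCommMonoid P] [Module R P]

def lowerDegreeValues (W1n : ℕ → Submodule R W₁) (W2n : ℕ → Submodule R W₂)
    (B : W₁ →ₗ[R] W₂ →ₗ[R] P) (N : ℕ) : Set P :=
  {z | ∃ (n' m' : ℕ) (x' : W₁) (y' : W₂),
    n' + m' < N ∧ x' ∈ W1n n' ∧ y' ∈ W2n m' ∧ z = B x' y'}

theorem eq_zero_of_mem_span_lowerDegreeValues {W1n : ℕ → Submodule R W₁}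
    {W2n : ℕ → Submodule R W₂} {B : W₁ →ₗ[R] W₂ →ₗ[R] P} {N : ℕ}
    (hB : ∀ n m, n + m < N → ∀ x ∈ W1n n, ∀ y ∈ W2n m, B x y = 0)
    {z : P} (hz : z ∈ Submodule.span R (lowerDegreeValues W1n W2n B N)) : z = 0 := by
  have hbot : Submodule.span R (lowerDegreeValues W1n W2n B N) = ⊥ := by
    rw [Submodule.span_eq_bot]
    rintro _ ⟨n, m, x, y, hlt, hx, hy, rfl⟩
    exact hB n m hlt x hx y hy
  rwa [hbot, Submodule.mem_bot] at hz

theorem apply_homogeneous_eq_zero_of_reduction (W1n : ℕ → Submodule R W₁) (W2n : ℕ → Submodule R W₂)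
    (C₁ M₁ : Submodule R W₁) (C₂ M₂ : Submodule R W₂)
    (hsplit1 : ∀ n, ∀ x ∈ W1n n, ∃ c ∈ C₁ ⊓ W1n n, ∃ m ∈ M₁ ⊓ W1n n, x = c + m)
    (hsplit2 : ∀ n, ∀ y ∈ W2n n, ∃ c ∈ C₂ ⊓ W2n n, ∃ m ∈ M₂ ⊓ W2n n, y = c + m)
    (B : W₁ →ₗ[R] W₂ →ₗ[R] P) (hM : ∀ x ∈ M₁, ∀ y ∈ M₂, B x y = 0)
    (hred1 : ∀ n m, ∀ c ∈ C₁ ⊓ W1n n, ∀ y ∈ W2n m,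
      B c y ∈ Submodule.span R (lowerDegreeValues W1n W2n B (n + m)))
    (hred2 : ∀ n m, ∀ x ∈ W1n n, ∀ c ∈ C₂ ⊓ W2n m,
      B x c ∈ Submodule.span R (lowerDegreeValues W1n W2n B (n + m)))
    (n m : ℕ) (x : W₁) (hx : x ∈ W1n n) (y : W₂) (hy : y ∈ W2n m) : B x y = 0 := by
  induction hN : n + m using Nat.strong_induction_on generalizing n m x y with
  | _ N ih =>
    have hlower : ∀ n' m', n' + m' < n + m → ∀ x' ∈ W1n n', ∀ y' ∈ W2n m', B x' y' = 0 :=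
      fun n' m' hlt x' hx' y' hy' ↦ ih _ (hN ▸ hlt) n' m' x' hx' y' hy' rfl
    obtain ⟨c₁, hc₁, m₁, hm₁, rfl⟩ := hsplit1 n x hx
    obtain ⟨c₂, hc₂, m₂, hm₂, rfl⟩ := hsplit2 m y hy
    have hC₁ : B c₁ (c₂ + m₂) = 0 :=
      eq_zero_of_mem_span_lowerDegreeValues hlower (hred1 n m c₁ hc₁ _ hy)
    have hC₂ : B m₁ c₂ = 0 :=
      eq_zero_of_mem_span_lowerDegreeValues hlower (hred2 n m m₁ hm₁.2 c₂ hc₂)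
    simp [hC₁, hC₂, hM m₁ hm₁.1 m₂ hm₂.1]

theorem LinearMap.eq_zero_of_iSup_eq_top {ι κ : Type*} {W1n : ι → Submodule R W₁}
    {W2n : κ → Submodule R W₂} (h1 : ⨆ i, W1n i = ⊤) (h2 : ⨆ j, W2n j = ⊤)
    {B : W₁ →ₗ[R] W₂ →ₗ[R] P} (hB : ∀ i j, ∀ x ∈ W1n i, ∀ y ∈ W2n j, B x y = 0) :
    B = 0 := by
  rw [Submodule.iSup_eq_span] at h1 h2
  refine LinearMap.ext_on h1 fun x hx => LinearMap.ext_on h2 fun y hy => ?_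
  obtain ⟨i, hx⟩ := Set.mem_iUnion.mp hx
  obtain ⟨j, hy⟩ := Set.mem_iUnion.mp hy
  exact hB i j x hx y hy

end Pairing

/-- injectivity of the evaluation map, abstract double
induction: let `B` be a bilinear pairing on ℕ-graded spaces
`W₁ = C₁ ⊕ M₁`, `W₂ = C₂ ⊕ M₂` (with graded complements), vanishing on
`M₁ × M₂`, such that on homogeneous elements `B(c, y)` for `c ∈ C₁` lies in the
span of values `B(x', y')` of strictly smaller total degree, and symmetrically
for `C₂`. Then `B ≡ 0`, i.e. `⟨w₃', Y(w₁, z)w₂⟩ = 0` for all `w₁, w₂`. -/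
theorem stmt_17 {W₁ W₂ : Type*} [AddCommGroup W₁] [Module ℂ W₁]
    [AddCommGroup W₂] [Module ℂ W₂]
    (W1n : ℕ → Submodule ℂ W₁) (W2n : ℕ → Submodule ℂ W₂)
    (h1 : DirectSum.IsInternal W1n) (h2 : DirectSum.IsInternal W2n)
    (C₁ M₁ : Submodule ℂ W₁) (C₂ M₂ : Submodule ℂ W₂)
    (hc1 : IsCompl C₁ M₁) (hc2 : IsCompl C₂ M₂)
    (hC1gr : C₁ = ⨆ n : ℕ, C₁ ⊓ W1n n) (hM1gr : M₁ = ⨆ n : ℕ, M₁ ⊓ W1n n)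
    (hC2gr : C₂ = ⨆ n : ℕ, C₂ ⊓ W2n n) (hM2gr : M₂ = ⨆ n : ℕ, M₂ ⊓ W2n n)
    (B : W₁ →ₗ[ℂ] W₂ →ₗ[ℂ] ℂ)
    (hM : ∀ x ∈ M₁, ∀ y ∈ M₂, B x y = 0)
    (hred1 : ∀ (n m : ℕ), ∀ c ∈ C₁ ⊓ W1n n, ∀ y ∈ W2n m,
      B c y ∈ Submodule.span ℂ
        {z : ℂ | ∃ (n' m' : ℕ) (x' : W₁) (y' : W₂),
          n' + m' < n + m ∧ x' ∈ W1n n' ∧ y' ∈ W2n m' ∧ z = B x' y'})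
    (hred2 : ∀ (n m : ℕ), ∀ x ∈ W1n n, ∀ c ∈ C₂ ⊓ W2n m,
      B x c ∈ Submodule.span ℂ
        {z : ℂ | ∃ (n' m' : ℕ) (x' : W₁) (y' : W₂),
          n' + m' < n + m ∧ x' ∈ W1n n' ∧ y' ∈ W2n m' ∧ z = B x' y'}) :
    ∀ (x : W₁) (y : W₂), B x y = 0 := by
  let := h1.chooseDecomposition
  let := h2.chooseDecomposition
  have hsplit1 := fun n (x : W₁) (hx : x ∈ W1n n) ↦ exists_mem_inf_add_mem_inf_of_isCompl W1n
    (Submodule.isHomogeneous_of_eq_iSup_inf W1n hC1gr)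
    (Submodule.isHomogeneous_of_eq_iSup_inf W1n hM1gr) hc1 hx
  have hsplit2 := fun n (y : W₂) (hy : y ∈ W2n n) ↦ exists_mem_inf_add_mem_inf_of_isCompl W2n
    (Submodule.isHomogeneous_of_eq_iSup_inf W2n hC2gr)
    (Submodule.isHomogeneous_of_eq_iSup_inf W2n hM2gr) hc2 hy
  have hB : B = 0 := LinearMap.eq_zero_of_iSup_eq_top h1.submodule_iSup_eq_top
    h2.submodule_iSup_eq_top fun n m x hx y hy ↦
      apply_homogeneous_eq_zero_of_reduction W1n W2n C₁ M₁ C₂ M₂ hsplit1 hsplit2 B hM hred1 hred2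
        n m x hx y hy
  simp [hB]
end
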